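/- Nominal unification problems can be translated in linear time (and linear size) into equational nominal unification problems (containing no freshness equations) with the same set of solutions, by replacing each freshness equation a #? t with the equality equation a.b.t ≈? b.b.t for some atom b ≠ a. -/
import Mathlib


set_option linter.unreachableTactic false
set_option linter.unusedTactic false

/-! Nominal terms -/

abbrev Atom := ℕ
abbrev Var := ℕ

/-- The swapping `(a b)` acting on atoms. -/
def swapAtom (a b c : Atom) : Atom := if c = a then b else if c = b then a else c

/-- A permutation presented as a finite list of swappings. -/
abbrev Perm0 := List (Atom × Atom)

/-- Action of a list of swappings: `(a₁ b₁)…(aₙ bₙ)·c = (a₁ b₁)·(…·((aₙ bₙ)·c))`. -/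
def permAtom (π : Perm0) (c : Atom) : Atom := π.foldr (fun p d => swapAtom p.1 p.2 d) c

/-- Nominal terms. -/
inductive NTerm where
  | atom : Atom → NTerm
  | app  : ℕ → List NTerm → NTerm
  | abs  : Atom → NTerm → NTerm
  | susp : Perm0 → Var → NTerm

/-- Action of a permutation (list of swappings) on a nominal term. -/
def permTerm (π : Perm0) : NTerm → NTerm
  | .atom a => .atom (permAtom π a)
  | .app f ts => .app f (ts.attach.map (fun t => permTerm π t.1))
  | .abs a t => .abs (permAtom π a) (permTerm π t)
  | .susp π' X => .susp (π ++ π') X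
decreasing_by
  all_goals simp_wf
  all_goals first
    | (have := List.sizeOf_lt_of_mem t.2; omega)
    | omega

/-- Action of a single swapping on a nominal term. -/
def swapTerm (a b : Atom) (t : NTerm) : NTerm := permTerm [(a, b)] t

/-- Variables of a nominal term. -/
def nvars : NTerm → Finset Var
  | .atom _ => ∅
  | .app _ ts => ts.attach.foldr (fun t s => nvars t.1 ∪ s) ∅
  | .abs _ t => nvars t
  | .susp _ X => {X}
decreasing_by
  all_goals simp_wf
  all_goals first
    | (have := List.sizeOf_lt_of_mem t.2; omega)
    | omega

/-- Atoms of a nominal term (including those in suspended permutations). -/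
def natoms : NTerm → Finset Atom
  | .atom a => {a}
  | .app _ ts => ts.attach.foldr (fun t s => natoms t.1 ∪ s) ∅
  | .abs a t => insert a (natoms t)
  | .susp π _ => π.foldr (fun p s => insert p.1 (insert p.2 s)) ∅
decreasing_by
  all_goals simp_wf
  all_goals first
    | (have := List.sizeOf_lt_of_mem t.2; omega)
    | omega

/-- Size of a nominal term. -/
def sizeN : NTerm → ℕ
  | .atom _ => 1
  | .app _ ts => 1 + (ts.attach.map (fun t => sizeN t.1)).sum
  | .abs _ t => 1 + sizeN t
  | .susp π _ => 1 + π.length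
decreasing_by
  all_goals simp_wf
  all_goals first
    | (have := List.sizeOf_lt_of_mem t.2; omega)
    | omega

/-! Freshness and α-equivalence for nominal terms -/

/-- The freshness judgement `Δ ⊢ a # t`. -/
inductive Fresh (Δ : Finset (Atom × Var)) : Atom → NTerm → Prop
  | atom {a a'} : a ≠ a' → Fresh Δ a (.atom a')
  | susp {a π X} : (permAtom π.reverse a, X) ∈ Δ → Fresh Δ a (.susp π X)
  | app {a f ts} : (∀ t ∈ ts, Fresh Δ a t) → Fresh Δ a (.app f ts)
  | abs1 {a t} : Fresh Δ a (.abs a t)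
  | abs2 {a a' t} : a ≠ a' → Fresh Δ a t → Fresh Δ a (.abs a' t)

/-- The α-equivalence judgement `Δ ⊢ t ≈ u`. -/
inductive Alpha (Δ : Finset (Atom × Var)) : NTerm → NTerm → Prop
  | atom (a) : Alpha Δ (.atom a) (.atom a)
  | susp {π π' X} : (∀ a, permAtom π a ≠ permAtom π' a → (a, X) ∈ Δ) →
      Alpha Δ (.susp π X) (.susp π' X)
  | app {f ts us} : ts.length = us.length →
      (∀ p ∈ ts.zip us, Alpha Δ p.1 p.2) → Alpha Δ (.app f ts) (.app f us)
  | abs1 {a t u} : Alpha Δ t u → Alpha Δ (.abs a t) (.abs a u)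
  | abs2 {a b t u} : a ≠ b → Alpha Δ t (swapTerm a b u) → Fresh Δ a u →
      Alpha Δ (.abs a t) (.abs b u)

/-- Nominal substitutions (partial, with explicit domain). -/
abbrev NSub := Var → Option NTerm

/-- Domain of a nominal substitution. -/
def domN (σ : NSub) : Set Var := {X | (σ X).isSome}

/-- Application of a nominal substitution (capturing; suspended permutations are applied). -/
def applyN (σ : NSub) : NTerm → NTerm
  | .atom a => .atom a
  | .app f ts => .app f (ts.attach.map (fun t => applyN σ t.1))
  | .abs a t => .abs a (applyN σ t)
  | .susp π X =>
      match σ X with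
      | some u => permTerm π u
      | none => .susp π X
decreasing_by
  all_goals simp_wf
  all_goals first
    | (have := List.sizeOf_lt_of_mem t.2; omega)
    | omega

/-- The trivial suspension of a variable. -/
def nsuspV (X : Var) : NTerm := .susp [] X

/-! λ-terms -/

/-- λ-calculus variables: either (the image of) an atom or (the image of) a nominal variable. -/
abbrev LVar := Atom ⊕ Var

/-- Untyped λ-terms with constants. -/
inductive LTerm where
  | var : LVar → LTerm
  | const : ℕ → LTerm
  | lam : LVar → LTerm → LTerm
  | app : LTerm → LTerm → LTerm
deriving DecidableEq

/-- Iterated application `h(t₁,…,tₙ)`. -/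
def appList (h : LTerm) (ts : List LTerm) : LTerm := ts.foldl .app h

/-- Iterated abstraction `λx₁…λxₙ.t`. -/
def lamList (xs : List LVar) (t : LTerm) : LTerm := xs.foldr .lam t

/-- Free variables of a λ-term. -/
def FVL : LTerm → Finset LVar
  | .var v => {v}
  | .const _ => ∅
  | .lam x t => (FVL t).erase x
  | .app t u => FVL t ∪ FVL u

/-- All variables (free, bound and binding) of a λ-term. -/
def allVarsL : LTerm → Finset LVar
  | .var v => {v}
  | .const _ => ∅
  | .lam x t => insert x (allVarsL t)
  | .app t u => allVarsL t ∪ allVarsL u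

/-- Binder variables of a λ-term. -/
def bvarsL : LTerm → Finset LVar
  | .var _ => ∅
  | .const _ => ∅
  | .lam x t => insert x (bvarsL t)
  | .app t u => bvarsL t ∪ bvarsL u

/-- Size of a λ-term. -/
def sizeL : LTerm → ℕ
  | .var _ => 1
  | .const _ => 1
  | .lam _ t => 1 + sizeL t
  | .app t u => 1 + sizeL t + sizeL u

/-- The function on variable names exchanging `x` and `y`. -/
def varMap (x y : LVar) : LVar → LVar := fun z => if z = x then y else if z = y then x else z

/-- Renaming all occurrences of variables (free, bound and binding) of a λ-term. -/
def renameAll (f : LVar → LVar) : LTerm → LTerm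
  | .var v => .var (f v)
  | .const c => .const c
  | .lam x t => .lam (f x) (renameAll f t)
  | .app t u => .app (renameAll f t) (renameAll f u)

/-- The swapping `(x y)·t` on λ-terms, exchanging `x` and `y` at every occurrence. -/
def swapL (x y : LVar) (t : LTerm) : LTerm := renameAll (varMap x y) t

theorem sizeL_renameAll (f : LVar → LVar) (t : LTerm) : sizeL (renameAll f t) = sizeL t := by
  induction t <;> simp [renameAll, sizeL, *]

/-- α-equivalence of λ-terms. -/
inductive AEq : LTerm → LTerm → Prop
  | var (v) : AEq (.var v) (.var v)
  | const (c) : AEq (.const c) (.const c)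
  | app {t t' u u'} : AEq t t' → AEq u u' → AEq (.app t u) (.app t' u')
  | lam {x y t u} (z : LVar) : z ∉ allVarsL t → z ∉ allVarsL u → z ≠ x → z ≠ y →
      AEq (swapL x z t) (swapL y z u) → AEq (.lam x t) (.lam y u)

/-- Naive (possibly capturing) substitution of `u` for the free variable `x`. -/
def nsubst (x : LVar) (u : LTerm) : LTerm → LTerm
  | .var y => if y = x then u else .var y
  | .const c => .const c
  | .app t1 t2 => .app (nsubst x u t1) (nsubst x u t2)
  | .lam y t => if y = x then .lam y t else .lam y (nsubst x u t)

/-- αβη-convertibility of λ-terms.  The β-rule carries a capture-freeness side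
condition; arbitrary redexes are handled by first α-converting. -/
inductive Conv : LTerm → LTerm → Prop
  | refl (t) : Conv t t
  | symm {t u} : Conv t u → Conv u t
  | trans {t u v} : Conv t u → Conv u v → Conv t v
  | appc {t t' u u'} : Conv t t' → Conv u u' → Conv (.app t u) (.app t' u')
  | lamc {x t t'} : Conv t t' → Conv (.lam x t) (.lam x t')
  | alpha {t u} : AEq t u → Conv t u
  | beta {x t u} : (∀ v ∈ FVL u, v ∉ bvarsL t) → Conv (.app (.lam x t) u) (nsubst x u t)
  | eta {x t} : x ∉ FVL t → Conv (.lam x (.app t (.var x))) t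

/-- A fresh variable not occurring in a given finite set. -/
def freshVar (s : Finset LVar) : LVar :=
  .inl ((s.image (fun v => match v with | .inl a => a | .inr b => b)).sup id + 1)

/-- Capture-avoiding simultaneous renaming of free variables along `ρ`. -/
def casub (ρ : LVar → LVar) : LTerm → LTerm
  | .var z => .var (ρ z)
  | .const c => .const c
  | .app t u => .app (casub ρ t) (casub ρ u)
  | .lam z t =>
      if h : ∃ w ∈ FVL t, w ≠ z ∧ ρ w = z then
        let z' := freshVar (allVarsL t ∪ (FVL t).image ρ ∪ {z})
        .lam z' (casub ρ (swapL z z' t))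
      else .lam z (casub (fun w => if w = z then z else ρ w) t)
termination_by t => sizeL t
decreasing_by
  all_goals simp_wf
  all_goals simp [swapL, sizeL_renameAll, sizeL]
  all_goals omega

/-! Sorts and simple types -/

/-- Nominal sorts and arities: atom sorts `ν`, data sorts `δ`, abstraction
sorts `⟨ν⟩τ` and arities `τ₁×…×τₙ→δ`. -/
inductive NSort where
  | atom : ℕ → NSort
  | data : ℕ → NSort
  | abs : ℕ → NSort → NSort
  | arr : List NSort → ℕ → NSort

/-- Simple types with one base type per atom sort and per data sort. -/
inductive STy where
  | atomT : ℕ → STy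
  | dataT : ℕ → STy
  | arrT : STy → STy → STy
deriving DecidableEq

/-- The sort-to-type translation `⟦·⟧`. -/
def trSort : NSort → STy
  | .atom n => .atomT n
  | .data n => .dataT n
  | .abs n τ => .arrT (.atomT n) (trSort τ)
  | .arr τs d => τs.attach.foldr (fun τ T => .arrT (trSort τ.1) T) (.dataT d)
decreasing_by
  all_goals simp_wf
  all_goals first
    | (have := List.sizeOf_lt_of_mem τ.2; omega)
    | omega

/-- A sort is basic if it is an atom sort or a data sort. -/
def NSort.isBasic : NSort → Prop
  | .atom _ => True
  | .data _ => True
  | _ => False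

/-- A nominal signature: sorts of atoms, sorts of variables, arities of function symbols. -/
structure Sig where
  sortA : Atom → ℕ
  sortV : Var → NSort
  arF : ℕ → List NSort × ℕ

/-- The sorting judgement for nominal terms. -/
inductive HasSortN (S : Sig) : NTerm → NSort → Prop
  | atom (a) : HasSortN S (.atom a) (.atom (S.sortA a))
  | app {f ts} : ts.length = (S.arF f).1.length →
      (∀ p ∈ ts.zip (S.arF f).1, HasSortN S p.1 p.2) →
      HasSortN S (.app f ts) (.data (S.arF f).2)
  | abs {a t τ} : HasSortN S t τ → HasSortN S (.abs a t) (.abs (S.sortA a) τ)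
  | susp {π X} : (∀ a, S.sortA (permAtom π a) = S.sortA a) →
      HasSortN S (.susp π X) (S.sortV X)

/-! The translation from nominal terms to λ-terms -/

/-- The atoms capturable by `X` under `Δ`: the sublist of `as` of atoms `a` with `a # X ∉ Δ`. -/
def capList (as : List Atom) (Δ : Finset (Atom × Var)) (X : Var) : List Atom :=
  as.filter (fun a => (a, X) ∉ Δ)

/-- The translation `⟦t⟧_Δ` of a nominal term into a λ-term, relative to the
fixed atom list `as` and the freshness environment `Δ`. -/
def trT (as : List Atom) (Δ : Finset (Atom × Var)) : NTerm → LTerm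
  | .atom a => .var (.inl a)
  | .app f ts => appList (.const f) (ts.attach.map (fun t => trT as Δ t.1))
  | .abs a t => .lam (.inl a) (trT as Δ t)
  | .susp π X => appList (.var (.inr X))
      ((capList as Δ X).map (fun b => .var (.inl (permAtom π b))))
decreasing_by
  all_goals simp_wf
  all_goals first
    | (have := List.sizeOf_lt_of_mem t.2; omega)
    | omega

/-- Typing contexts as total functions. -/
abbrev Ctx := LVar → STy

/-- The simply-typed λ-calculus typing judgement. -/
inductive HasTy (cty : ℕ → STy) : Ctx → LTerm → STy → Prop
  | var (Γ : Ctx) (v) : HasTy cty Γ (.var v) (Γ v)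
  | const (Γ : Ctx) (c) : HasTy cty Γ (.const c) (cty c)
  | lam {Γ : Ctx} {x t T U} : HasTy cty (Function.update Γ x T) t U →
      HasTy cty Γ (.lam x t) (.arrT T U)
  | app {Γ : Ctx} {t u T U} : HasTy cty Γ t (.arrT T U) → HasTy cty Γ u T →
      HasTy cty Γ (.app t u) U

/-- Type of the constant translating a function symbol `f : τ₁×…×τₙ→δ`. -/
def ctySig (S : Sig) (f : ℕ) : STy :=
  (S.arF f).1.foldr (fun τ T => .arrT (trSort τ) T) (.dataT (S.arF f).2)

/-- Type assigned to the free variable translating a nominal variable `X`. -/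
def varTy (S : Sig) (as : List Atom) (Δ : Finset (Atom × Var)) (X : Var) : STy :=
  (capList as Δ X).foldr (fun a T => .arrT (.atomT (S.sortA a)) T) (trSort (S.sortV X))

/-- The typing context of the translation: atoms get their atom-sort base type
and nominal variables get the arrow type over their capturable atoms. -/
def trCtx (S : Sig) (as : List Atom) (Δ : Finset (Atom × Var)) : Ctx
  | .inl a => .atomT (S.sortA a)
  | .inr X => varTy S as Δ X

/-! Higher-order patterns -/

/-- `IsPattern B t` : in the scope of bound variables `B`, every free variable of `t`
is applied to a list of pairwise distinct bound variables. -/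
inductive IsPattern : List LVar → LTerm → Prop
  | bvar {B v} : v ∈ B → IsPattern B (.var v)
  | flex {B : List LVar} {X : Var} {args : List LVar} : (.inr X : LVar) ∉ B → (∀ a ∈ args, a ∈ B) → args.Nodup →
      IsPattern B (appList (.var (.inr X)) (args.map .var))
  | rigid {B h ts} : ((∃ c, h = .const c) ∨ (∃ v, h = .var v ∧ v ∈ B)) →
      (∀ t ∈ ts, IsPattern B t) → IsPattern B (appList h ts)
  | lam {B x t} : IsPattern (x :: B) t → IsPattern B (.lam x t)

/-! Unification problems and their translations -/

/-- Constraints of a (general) nominal unification problem. -/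
inductive NConstraint where
  | eq : NTerm → NTerm → NConstraint
  | fr : Atom → NTerm → NConstraint

/-- A nominal unification problem. -/
abbrev NProb := List NConstraint

/-- An equational nominal unification problem: a list of equality equations. -/
abbrev EProb := List (NTerm × NTerm)

/-- `⟨Δ, σ⟩` solves a constraint. -/
def solvesC (Δ : Finset (Atom × Var)) (σ : NSub) : NConstraint → Prop
  | .eq t u => Alpha Δ (applyN σ t) (applyN σ u)
  | .fr a t => Fresh Δ a (applyN σ t)

/-- `⟨Δ, σ⟩` solves a nominal unification problem. -/
def solvesP (Δ : Finset (Atom × Var)) (σ : NSub) (P : NProb) : Prop :=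
  ∀ c ∈ P, solvesC Δ σ c

/-- `⟨Δ, σ⟩` solves an equational nominal unification problem. -/
def solvesE (Δ : Finset (Atom × Var)) (σ : NSub) (P : EProb) : Prop :=
  ∀ e ∈ P, Alpha Δ (applyN σ e.1) (applyN σ e.2)

/-- A problem is equational if it contains no freshness constraints. -/
def isEquational (P : NProb) : Prop := ∀ c ∈ P, ∀ a t, c ≠ .fr a t

def sizeConstraint : NConstraint → ℕ
  | .eq t u => 1 + sizeN t + sizeN u
  | .fr _ t => 2 + sizeN t

def sizeNP (P : NProb) : ℕ := (P.map sizeConstraint).sum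

def sizeEP (P : EProb) : ℕ := (P.map (fun e => 1 + sizeN e.1 + sizeN e.2)).sum

/-- Variables of an equational problem. -/
def varsEP (P : EProb) : Finset Var := (P.map (fun e => nvars e.1 ∪ nvars e.2)).foldr (· ∪ ·) ∅

/-- Atoms of an equational problem. -/
def atomsEP (P : EProb) : Finset Atom := (P.map (fun e => natoms e.1 ∪ natoms e.2)).foldr (· ∪ ·) ∅

/-- Translation of an equation: both sides are translated with the empty
environment and closed under `λa₁…λaₙ`. -/
def trEq (as : List Atom) (e : NTerm × NTerm) : LTerm × LTerm :=
  (lamList (as.map .inl) (trT as ∅ e.1), lamList (as.map .inl) (trT as ∅ e.2))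

/-- Translation of an equational nominal problem into a higher-order problem. -/
def trProb (as : List Atom) (P : EProb) : List (LTerm × LTerm) := P.map (trEq as)

def sizeLP (Q : List (LTerm × LTerm)) : ℕ := (Q.map (fun e => 1 + sizeL e.1 + sizeL e.2)).sum

/-! λ-substitutions -/

/-- λ-substitutions over the (images of) nominal variables, with explicit domain. -/
abbrev LSub := Var → Option LTerm

/-- Domain of a λ-substitution. -/
def domL (σ : LSub) : Set Var := {X | (σ X).isSome}

/-- Application of a λ-substitution.  (In translated problems the values are
closed with respect to atom variables, so no capture can occur.) -/
def applyL (σ : LSub) : LTerm → LTerm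
  | .var (.inr X) => (σ X).getD (.var (.inr X))
  | .var v => .var v
  | .const c => .const c
  | .lam x t => .lam x (applyL σ t)
  | .app t u => .app (applyL σ t) (applyL σ u)

/-- `σ` solves a higher-order problem up to αβη. -/
def solvesL (σ : LSub) (Q : List (LTerm × LTerm)) : Prop :=
  ∀ e ∈ Q, Conv (applyL σ e.1) (applyL σ e.2)

/-- The translation `⟦σ⟧_Δ` of a nominal substitution. -/
def trSub (as : List Atom) (Δ : Finset (Atom × Var)) (σ : NSub) : LSub :=
  fun X => (σ X).map (fun t => lamList (as.map .inl) (trT as Δ t))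

/-! The reverse translation -/

/-- The reverse translation relation from λ-terms to nominal terms
(nondeterministic because of the choice of the permutation `π`). -/
inductive RevTr (as : List Atom) (Δ : Finset (Atom × Var)) : LTerm → NTerm → Prop
  | atom (a) : RevTr as Δ (.var (.inl a)) (.atom a)
  | appf {f ts us} : ts.length = us.length → (∀ p ∈ ts.zip us, RevTr as Δ p.1 p.2) →
      RevTr as Δ (appList (.const f) ts) (.app f us)
  | lam {a t u} : RevTr as Δ t u → RevTr as Δ (.lam (.inl a) t) (.abs a u)
  | susp {X : Var} {π : Perm0} {cs : List Atom} : (∀ a ∉ as, permAtom π a = a) →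
      cs.map (permAtom π) = capList as Δ X →
      RevTr as Δ (appList (.var (.inr X)) (cs.map (fun c => .var (.inl c))))
        (.susp π.reverse X)

/-- β-reduce the application of a λ-term to the atom variables `as`. -/
def applyAtoms : LTerm → List Atom → LTerm
  | .lam x t, a :: rest => applyAtoms (nsubst x (.var (.inl a)) t) rest
  | t, rest => appList t (rest.map (fun a => .var (.inl a)))

/-! "More general" relations on unifiers -/

/-- `Δ₂ ⊢ σ'(Δ₁)` : every freshness constraint of `Δ₁` holds after applying `σ'`. -/
def freshEnvHolds (Δ₂ : Finset (Atom × Var)) (σ' : NSub) (Δ₁ : Finset (Atom × Var)) : Prop :=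
  ∀ p ∈ Δ₁, Fresh Δ₂ p.1 (applyN σ' (nsuspV p.2))

/-- `⟨Δ₁,σ₁⟩` is more general than `⟨Δ₂,σ₂⟩`. -/
def moreGeneralN (Δ₁ : Finset (Atom × Var)) (σ₁ : NSub)
    (Δ₂ : Finset (Atom × Var)) (σ₂ : NSub) : Prop :=
  ∃ σ' : NSub, freshEnvHolds Δ₂ σ' Δ₁ ∧
    ∀ X ∈ domN σ₁ ∪ domN σ₂,
      Alpha Δ₂ (applyN σ' (applyN σ₁ (nsuspV X))) (applyN σ₂ (nsuspV X))

/-- A λ-substitution `σ₁` is more general than `σ₂` (modulo αβη). -/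
def moreGeneralL (σ₁ σ₂ : LSub) : Prop :=
  ∃ σ' : LSub, ∀ X ∈ domL σ₁ ∪ domL σ₂,
    Conv (applyL σ' (applyL σ₁ (.var (.inr X)))) (applyL σ₂ (.var (.inr X)))

/-! Auxiliary lemmas for statement7 -/

theorem swapAtom_invol (a b c : Atom) : swapAtom a b (swapAtom a b c) = c := by
  unfold swapAtom; split_ifs <;> simp_all

theorem permAtom_cons (p : Atom × Atom) (π : Perm0) (c : Atom) :
    permAtom (p :: π) c = swapAtom p.1 p.2 (permAtom π c) := rfl

theorem permAtom_append (l l' : Perm0) (c : Atom) :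
    permAtom (l ++ l') c = permAtom l (permAtom l' c) := by
  simp [permAtom, List.foldr_append]

theorem permAtom_reverse_permAtom (π : Perm0) (a : Atom) :
    permAtom π.reverse (permAtom π a) = a := by
  induction π generalizing a with
  | nil => rfl
  | cons p π ih =>
    rw [List.reverse_cons, permAtom_append]
    show permAtom π.reverse (swapAtom p.1 p.2 (swapAtom p.1 p.2 (permAtom π a))) = a
    rw [swapAtom_invol, ih]

theorem permAtom_inj (π : Perm0) {a b : Atom} (h : permAtom π a = permAtom π b) : a = b := by
  have h2 := permAtom_reverse_permAtom π a
  rw [h, permAtom_reverse_permAtom] at h2; exact h2.symm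

theorem mem_zip_map_self {α β : Type*} {l : List α} {f : α → β} {p : α × β}
    (h : p ∈ l.zip (l.map f)) : p.1 ∈ l ∧ p.2 = f p.1 := by
  induction l with
  | nil => simp at h
  | cons x l ih =>
    simp only [List.map_cons, List.zip_cons_cons, List.mem_cons] at h
    rcases h with h | h
    · subst h; simp
    · have := ih h; exact ⟨List.mem_cons_of_mem _ this.1, this.2⟩

theorem permTerm_atom (π : Perm0) (a : Atom) :
    permTerm π (.atom a) = .atom (permAtom π a) := by rw [permTerm]

theorem permTerm_app (π : Perm0) (f : ℕ) (ts : List NTerm) :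
    permTerm π (.app f ts) = .app f (ts.map (permTerm π)) := by
  rw [permTerm]; simp [List.attach_map_val]

theorem permTerm_abs (π : Perm0) (a : Atom) (t : NTerm) :
    permTerm π (.abs a t) = .abs (permAtom π a) (permTerm π t) := by rw [permTerm]

theorem permTerm_susp (π π' : Perm0) (X : Var) :
    permTerm π (.susp π' X) = .susp (π ++ π') X := by rw [permTerm]

theorem NTerm.myInd (motive : NTerm → Prop)
    (hatom : ∀ a, motive (.atom a))
    (happ : ∀ f ts, (∀ t ∈ ts, motive t) → motive (.app f ts))
    (habs : ∀ a t, motive t → motive (.abs a t))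
    (hsusp : ∀ π X, motive (.susp π X)) : ∀ t, motive t
  | .atom a => hatom a
  | .app f ts => happ f ts (fun t ht =>
      have := List.sizeOf_lt_of_mem ht
      NTerm.myInd motive hatom happ habs hsusp t)
  | .abs a t => habs a t (NTerm.myInd motive hatom happ habs hsusp t)
  | .susp π X => hsusp π X
termination_by t => sizeOf t
decreasing_by all_goals simp_wf <;> omega

theorem alpha_double (Δ : Finset (Atom × Var)) (π π' : Perm0)
    (h : ∀ c, permAtom π (permAtom π' c) = c) (t : NTerm) :
    Alpha Δ t (permTerm π (permTerm π' t)) := by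
  induction t using NTerm.myInd with
  | hatom a => rw [permTerm_atom, permTerm_atom, h a]; exact Alpha.atom a
  | happ f ts ih =>
    rw [permTerm_app, permTerm_app, List.map_map]
    refine Alpha.app (by simp) ?_
    intro p hp
    obtain ⟨h1, h2⟩ := mem_zip_map_self hp
    rw [h2]; exact ih _ h1
  | habs a t ih =>
    rw [permTerm_abs, permTerm_abs, h a]; exact Alpha.abs1 ih
  | hsusp ρ X =>
    rw [permTerm_susp, permTerm_susp]
    refine Alpha.susp ?_
    intro c hc
    exfalso; apply hc
    rw [permAtom_append, permAtom_append, h]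

theorem fresh_equiv {Δ : Finset (Atom × Var)} {a : Atom} {t : NTerm} (π : Perm0)
    (h : Fresh Δ a t) : Fresh Δ (permAtom π a) (permTerm π t) := by
  induction h with
  | atom hne =>
    rw [permTerm_atom]
    exact Fresh.atom (fun he => hne (permAtom_inj π he))
  | susp hmem =>
    rw [permTerm_susp]
    refine Fresh.susp ?_
    rwa [List.reverse_append, permAtom_append, permAtom_reverse_permAtom]
  | app hts ih =>
    rw [permTerm_app]
    refine Fresh.app ?_
    intro t' ht'
    obtain ⟨u, hu, rfl⟩ := List.mem_map.mp ht'
    exact ih u hu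
  | abs1 =>
    rw [permTerm_abs]; exact Fresh.abs1
  | abs2 hne _ ih =>
    rw [permTerm_abs]
    exact Fresh.abs2 (fun he => hne (permAtom_inj π he)) ih

theorem swap_swap_atom (a b c : Atom) :
    permAtom [(b, a)] (permAtom [(a, b)] c) = c := by
  show swapAtom b a (swapAtom a b c) = c
  unfold swapAtom; split_ifs <;> simp_all

/-- Main lemma: `a # s` iff `a.b.s ≈ b.b.s` (for `a ≠ b`). -/
theorem fresh_iff_alpha {Δ : Finset (Atom × Var)} {a b : Atom} (hab : a ≠ b) (s : NTerm) :
    Fresh Δ a s ↔ Alpha Δ (.abs a (.abs b s)) (.abs b (.abs b s)) := by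
  constructor
  · intro hf
    refine Alpha.abs2 hab ?_ (Fresh.abs2 hab hf)
    show Alpha Δ (.abs b s) (permTerm [(a, b)] (.abs b s))
    rw [permTerm_abs]
    have hb : permAtom [(a, b)] b = a := by
      show swapAtom a b b = a
      unfold swapAtom; split_ifs <;> simp_all
    rw [hb]
    refine Alpha.abs2 (Ne.symm hab) ?_ ?_
    · show Alpha Δ s (permTerm [(b, a)] (permTerm [(a, b)] s))
      exact alpha_double Δ _ _ (fun c => swap_swap_atom a b c) s
    · have := fresh_equiv [(a, b)] hf
      have ha : permAtom [(a, b)] a = b := by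
        show swapAtom a b a = b
        unfold swapAtom; split_ifs <;> simp_all
      rwa [ha] at this
  · intro hal
    cases hal with
    | abs1 => exact absurd rfl hab
    | abs2 _ _ hf =>
      cases hf with
      | abs1 => exact absurd rfl hab
      | abs2 _ hf' => exact hf'

theorem applyN_abs (σ : NSub) (a : Atom) (t : NTerm) :
    applyN σ (.abs a t) = .abs a (applyN σ t) := by rw [applyN]

/-- The translation of one constraint. -/
def trC : NConstraint → NConstraint
  | .eq t u => .eq t u
  | .fr a t => .eq (.abs a (.abs (a+1) t)) (.abs (a+1) (.abs (a+1) t))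

theorem sizeN_abs (a : Atom) (t : NTerm) : sizeN (.abs a t) = 1 + sizeN t := by rw [sizeN]

theorem solvesC_iff (Δ : Finset (Atom × Var)) (σ : NSub) (c : NConstraint) :
    solvesC Δ σ c ↔ solvesC Δ σ (trC c) := by
  cases c with
  | eq t u => rfl
  | fr a t =>
    have hab : a ≠ a + 1 := fun h => Nat.succ_ne_self a h.symm
    show Fresh Δ a (applyN σ t) ↔ Alpha Δ (applyN σ (.abs a (.abs (a+1) t)))
        (applyN σ (.abs (a+1) (.abs (a+1) t)))
    rw [applyN_abs, applyN_abs, applyN_abs, applyN_abs]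
    exact fresh_iff_alpha hab (applyN σ t)

/-- nominal unification problems translate, with linear size
blow-up, into equational problems with the same solutions, each freshness
equation `a #? t` being replaced by `a.b.t ≈? b.b.t` for some `b ≠ a`. -/
theorem statement7 :
    ∃ (T : NProb → NProb) (C : ℕ), ∀ P : NProb,
      isEquational (T P) ∧
      (∀ (Δ : Finset (Atom × Var)) (σ : NSub), solvesP Δ σ P ↔ solvesP Δ σ (T P)) ∧
      sizeNP (T P) ≤ C * sizeNP P ∧
      (∀ c ∈ P,
        (∀ t u, c = .eq t u → c ∈ T P) ∧
        (∀ a t, c = .fr a t → ∃ b, b ≠ a ∧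
          NConstraint.eq (.abs a (.abs b t)) (.abs b (.abs b t)) ∈ T P)) := by
  refine ⟨fun P => P.map trC, 3, fun P => ⟨?_, ?_, ?_, ?_⟩⟩
  · intro c hc a t
    obtain ⟨c', _, rfl⟩ := List.mem_map.mp hc
    cases c' <;> simp [trC]
  · intro Δ σ
    constructor
    · intro hs c hc
      obtain ⟨c', hc', rfl⟩ := List.mem_map.mp hc
      exact (solvesC_iff Δ σ c').mp (hs c' hc')
    · intro hs c hc
      exact (solvesC_iff Δ σ c).mpr (hs (trC c) (List.mem_map.mpr ⟨c, hc, rfl⟩))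
  · induction P with
    | nil => simp [sizeNP]
    | cons c P ih =>
      have hc : sizeConstraint (trC c) ≤ 3 * sizeConstraint c := by
        cases c with
        | eq t u => simp [trC, sizeConstraint]
        | fr a t =>
          simp only [trC, sizeConstraint, sizeN_abs]
          omega
      simp only [List.map_cons, sizeNP, List.sum_cons] at ih ⊢
      omega
  · intro c hc
    constructor
    · intro t u hce
      have : trC c = c := by rw [hce]; rfl
      rw [← this]; exact List.mem_map.mpr ⟨c, hc, rfl⟩
    · intro a t hcf
      refine ⟨a + 1, Nat.succ_ne_self a, ?_⟩
      have : trC c = NConstraint.eq (.abs a (.abs (a+1) t)) (.abs (a+1) (.abs (a+1) t)) := by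
        rw [hcf]; rfl
      rw [← this]; exact List.mem_map.mpr ⟨c, hc, rfl⟩
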